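/- arXiv:1301.3347 — 2 statements merged into one kernel-verified Lean document; each statement's English description precedes it below -/
import Mathlib

section
/- In any finite exact potential game, every maximal improvement path terminates: there is no infinite sequence of joint actions s_0, s_1, s_2, … in which each s_{k+1} differs from s_k in exactly one player's action and that deviating player strictly increases their own utility. -/
/-- In a finite exact potential game there is no infinite improvement path: no infinite
sequence of joint actions in which each successive profile differs from the previous one in
exactly one player's action and the deviating player strictly increases their own utility. -/
theorem no_infinite_improvement_path_in_potential_game
    {n : ℕ} (S : Fin n → Type*) [∀ i, Fintype (S i)] [∀ i, Nonempty (S i)]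
    (u : Fin n → (∀ i, S i) → ℝ) (φ : (∀ i, S i) → ℝ)
    (hpot : ∀ (i : Fin n) (s : ∀ j, S j) (a b : S i),
      u i (Function.update s i a) - u i (Function.update s i b) =
        φ (Function.update s i a) - φ (Function.update s i b)) :
    ¬ ∃ seq : ℕ → ∀ i, S i, ∀ k : ℕ, ∃ i : Fin n,
      (∀ j : Fin n, j ≠ i → seq (k + 1) j = seq k j) ∧
      seq (k + 1) i ≠ seq k i ∧
      u i (seq k) < u i (seq (k + 1)) := by
  rintro ⟨seq, hseq⟩
  have hstep : ∀ k, φ (seq k) < φ (seq (k + 1)) := by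
    intro k
    obtain ⟨i, hoff, _, hlt⟩ := hseq k
    have hupd1 : Function.update (seq k) i (seq (k + 1) i) = seq (k + 1) := by
      funext j
      by_cases hj : j = i
      · subst hj; simp
      · rw [Function.update_of_ne hj, hoff j hj]
    have hupd2 : Function.update (seq k) i (seq k i) = seq k := by
      simp
    have := hpot i (seq k) (seq (k + 1) i) (seq k i)
    rw [hupd1, hupd2] at this
    linarith
  have hmono : StrictMono (fun k => φ (seq k)) := strictMono_nat_of_lt_succ hstep
  have hinj : Function.Injective seq := fun a b hab => by
    have : φ (seq a) = φ (seq b) := by rw [hab]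
    exact hmono.injective this
  exact Set.infinite_range_of_injective hinj (Set.toFinite _)
end

section
/- Strict Nash equilibria are absorbing for belief-based best-response play with monotone belief updates: consider a two-player, two-action game where each player's belief about the opponent is a probability σ_t(s) that strictly increases after the opponent plays s (and strictly decreases for the unplayed action), and each plays a best response to current beliefs with strict tie-breaking. If the joint action played at time t is a strict Nash equilibrium s* and each player's current belief already makes s* their unique best response, then s* is played at all subsequent times. -/
/-!
While `s*` is being played, each player's belief moves from its current value towards the
point mass on the opponent's equilibrium action. Expected utility is affine in the belief, so
a strict preference for `s*` that holds at the current belief (by best response) and at the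
point mass (by strict Nash) persists at every belief in between. Hence `s*` remains the unique
best response and is played again, and induction on time concludes.
-/

open Set

/-- Expected utility of own action `x` when the opponent is believed to play `true` with
probability `p`; `v x y` is the utility of `x` against `y`. -/
def expectedUtility (v : Bool → Bool → ℝ) (p : ℝ) (x : Bool) : ℝ :=
  p * v x true + (1 - p) * v x false

def pointBelief (y : Bool) : ℝ := if y then 1 else 0

def IsStrictBestResponse (v : Bool → Bool → ℝ) (p : ℝ) (s : Bool) : Prop :=
  ∀ x, x ≠ s → expectedUtility v p x < expectedUtility v p s

lemma expectedUtility_pointBelief (v : Bool → Bool → ℝ) (y x : Bool) :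
    expectedUtility v (pointBelief y) x = v x y := by
  cases y <;> simp [expectedUtility, pointBelief]

lemma expectedUtility_lt_of_mem_uIcc {v : Bool → Bool → ℝ} {x x' : Bool} {p q r : ℝ}
    (hq : expectedUtility v q x < expectedUtility v q x')
    (hr : expectedUtility v r x < expectedUtility v r x') (hp : p ∈ uIcc q r) :
    expectedUtility v p x < expectedUtility v p x' := by
  unfold expectedUtility at *
  -- the gap `p * c + (1 - p) * d` is affine in `p`, hence monotone one way or the other
  set c := v x' true - v x true
  set d := v x' false - v x false
  rcases le_total 0 (c - d) with hcd | hcd <;>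
    rcases mem_uIcc.1 hp with ⟨h₁, h₂⟩ | ⟨h₁, h₂⟩ <;>
    nlinarith

lemma IsStrictBestResponse.of_mem_uIcc_pointBelief {v : Bool → Bool → ℝ} {s y : Bool}
    {p q : ℝ} (hq : IsStrictBestResponse v q s) (hnash : ∀ x, x ≠ s → v x y < v s y)
    (hp : p ∈ uIcc q (pointBelief y)) : IsStrictBestResponse v p s := fun x hx =>
  expectedUtility_lt_of_mem_uIcc (hq x hx)
    (by simpa only [expectedUtility_pointBelief] using hnash x hx) hp

lemma IsStrictBestResponse.eq {v : Bool → Bool → ℝ} {p : ℝ} {s s' : Bool}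
    (h : IsStrictBestResponse v p s) (h' : IsStrictBestResponse v p s') : s = s' := by
  by_contra hne
  exact (h s' (Ne.symm hne)).asymm (h' s hne)

lemma mem_uIcc_pointBelief_of_update {p p' : ℝ} {y : Bool} (h₀ : 0 ≤ p') (h₁ : p' ≤ 1)
    (hupd : (y = true → p < p') ∧ (y = false → p' < p)) : p' ∈ uIcc p (pointBelief y) := by
  cases y
  · exact mem_uIcc.2 (Or.inr ⟨h₀, (hupd.2 rfl).le⟩)
  · exact mem_uIcc.2 (Or.inl ⟨(hupd.1 rfl).le, h₁⟩)

/-- Players are indexed by `Bool` and actions by `Bool`; `u i x y` is player `i`'s utility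
for own action `x` against opponent action `y`; `b t i` is player `i`'s belief (probability)
that the opponent plays `true` at time `t`; `a t i` is the action played by `i` at time `t`. -/
theorem strict_nash_absorbing_for_belief_best_response_general
    (u : Bool → Bool → Bool → ℝ)
    (a : ℕ → Bool → Bool) (b : ℕ → Bool → ℝ)
    (EU : Bool → ℝ → Bool → ℝ)
    (hEU : ∀ i p x, EU i p x = p * u i x true + (1 - p) * u i x false)
    (hbel : ∀ t i, 0 ≤ b t i ∧ b t i ≤ 1)
    -- beliefs update monotonically toward the observed opponent action (weakly toward
    -- the point mass, which is encoded by `hbel`):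
    (hupd : ∀ t i, (a t (!i) = true → b t i < b (t + 1) i) ∧
                   (a t (!i) = false → b (t + 1) i < b t i))
    -- each player plays the strict best response to their current beliefs:
    (hbr : ∀ t i x, x ≠ a t i → EU i (b t i) x < EU i (b t i) (a t i))
    (sstar : Bool → Bool)
    -- `sstar` is a strict Nash equilibrium:
    (hnash : ∀ i x, x ≠ sstar i → u i x (sstar (!i)) < u i (sstar i) (sstar (!i)))
    (t0 : ℕ)
    -- at time `t0`, `sstar` is played and is each player's unique best response:
    (hplay : ∀ i, a t0 i = sstar i) :
    ∀ t, t0 ≤ t → ∀ i, a t i = sstar i := by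
  obtain rfl : EU = fun i => expectedUtility (u i) := funext fun i => funext fun p =>
    funext fun x => hEU i p x
  have hbr' : ∀ t i, IsStrictBestResponse (u i) (b t i) (a t i) := hbr
  intro t ht
  induction t, ht using Nat.le_induction with
  | base => exact hplay
  | succ n _ ih =>
    intro i
    have hstep : b (n + 1) i ∈ uIcc (b n i) (pointBelief (sstar (!i))) :=
      mem_uIcc_pointBelief_of_update (hbel (n + 1) i).1 (hbel (n + 1) i).2
        (by simpa only [ih (!i)] using hupd n i)
    have hsstar : IsStrictBestResponse (u i) (b (n + 1) i) (sstar i) :=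
      (ih i ▸ hbr' n i).of_mem_uIcc_pointBelief (hnash i) hstep
    exact (hbr' (n + 1) i).eq hsstar

/-- Strict Nash equilibria are absorbing for belief-based best-response play with monotone
belief updates (two players, two actions). Players are indexed by `Bool` and actions by
`Bool`; `u i x y` is player `i`'s utility for own action `x` against opponent action `y`;
`b t i` is player `i`'s belief (probability) that the opponent plays `true` at time `t`;
`a t i` is the action played by `i` at time `t`; `EU i p x = p * u i x true +
(1 − p) * u i x false` is the expected utility. -/
theorem strict_nash_absorbing_for_belief_best_response
    (u : Bool → Bool → Bool → ℝ)
    (a : ℕ → Bool → Bool) (b : ℕ → Bool → ℝ)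
    (EU : Bool → ℝ → Bool → ℝ)
    (hEU : ∀ i p x, EU i p x = p * u i x true + (1 - p) * u i x false)
    (hbel : ∀ t i, 0 ≤ b t i ∧ b t i ≤ 1)
    -- beliefs update monotonically toward the observed opponent action (weakly toward
    -- the point mass, which is encoded by `hbel`):
    (hupd : ∀ t i, (a t (!i) = true → b t i < b (t + 1) i) ∧
                   (a t (!i) = false → b (t + 1) i < b t i))
    -- each player plays the strict best response to their current beliefs:
    (hbr : ∀ t i x, x ≠ a t i → EU i (b t i) x < EU i (b t i) (a t i))
    (sstar : Bool → Bool)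
    -- `sstar` is a strict Nash equilibrium:
    (hnash : ∀ i x, x ≠ sstar i → u i x (sstar (!i)) < u i (sstar i) (sstar (!i)))
    (t0 : ℕ)
    -- at time `t0`, `sstar` is played and is each player's unique best response:
    (hplay : ∀ i, a t0 i = sstar i)
    (hbr0 : ∀ i x, x ≠ sstar i → EU i (b t0 i) x < EU i (b t0 i) (sstar i)) :
    ∀ t, t0 ≤ t → ∀ i, a t i = sstar i :=
  strict_nash_absorbing_for_belief_best_response_general u a b EU hEU hbel hupd hbr sstar hnash t0
    hplay
end
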